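/- For any positive masses m₁, m₂, m₃, m₄, the set 𝓜 = {r ∈ ℝ⁶ : I(r) = 1 and P(r) = 0} is homeomorphic to S² × S², the product of two 2-spheres (indeed, to the oriented Grassmannian Gr₊(2,4)). -/

import Mathlib

/-- The Ptolemy function `P` as a function of
`r = (r₁₂, r₁₃, r₁₄, r₂₃, r₂₄, r₃₄) ∈ ℝ⁶`. -/
def Pvec (r : Fin 6 → ℝ) : ℝ :=
  r 0 * r 5 + r 2 * r 3 - r 1 * r 4

/-- The moment of inertia `I` as a function of `r ∈ ℝ⁶`. -/
noncomputable def Ivec (m1 m2 m3 m4 : ℝ) (r : Fin 6 → ℝ) : ℝ :=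
  (1/(2*(m1 + m2 + m3 + m4))) *
    (m1*m2*(r 0)^2 + m1*m3*(r 1)^2 + m1*m4*(r 2)^2 +
     m2*m3*(r 3)^2 + m2*m4*(r 4)^2 + m3*m4*(r 5)^2)

/-- The set `𝓜 = {r ∈ ℝ⁶ : I(r) = 1, P(r) = 0}`. -/
noncomputable def setM (m1 m2 m3 m4 : ℝ) : Set (Fin 6 → ℝ) :=
  {r | Ivec m1 m2 m3 m4 r = 1 ∧ Pvec r = 0}

/-!
Rescaling `r_ij` by `√(m_i m_j / (2M))` turns `I` into the squared Euclidean norm on `ℝ⁶` and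
multiplies `P` by a positive constant, so `𝓜` is linearly homeomorphic to the intersection of the
unit sphere with the Plücker quadric `x₁₂x₃₄ + x₁₄x₂₃ − x₁₃x₂₄ = 0`. Splitting `ℝ⁶ = ℝ³ × ℝ³` so
that this quadric reads `⟪a, b⟫ = 0`, the map `(a, b) ↦ (a + b, a − b)` carries
`{‖a‖² + ‖b‖² = 1, ⟪a, b⟫ = 0}` onto `S² × S²`.
-/

open Metric RealInnerProductSpace

section OrthogonalPairs

variable {V : Type*} [NormedAddCommGroup V] [InnerProductSpace ℝ V]

variable (V) in
noncomputable def addSubHomeomorph : V × V ≃ₜ V × V where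
  toFun p := (p.1 + p.2, p.1 - p.2)
  invFun q := ((2 : ℝ)⁻¹ • (q.1 + q.2), (2 : ℝ)⁻¹ • (q.1 - q.2))
  left_inv p := by ext <;> simp only <;> module
  right_inv q := by ext <;> simp only <;> module
  continuous_toFun := by fun_prop
  continuous_invFun := by fun_prop

theorem norm_add_eq_one_and_norm_sub_eq_one_iff (a b : V) :
    ‖a + b‖ = 1 ∧ ‖a - b‖ = 1 ↔ ‖a‖ ^ 2 + ‖b‖ ^ 2 = 1 ∧ ⟪a, b⟫ = 0 := by
  rw [← pow_eq_one_iff_of_nonneg (norm_nonneg (a + b)) two_ne_zero,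
    ← pow_eq_one_iff_of_nonneg (norm_nonneg (a - b)) two_ne_zero, norm_add_sq_real,
    norm_sub_sq_real]
  constructor <;> rintro ⟨h₁, h₂⟩ <;> constructor <;> linarith

variable (V) in
noncomputable def orthogonalPairsHomeomorph :
    {p : V × V // ‖p.1‖ ^ 2 + ‖p.2‖ ^ 2 = 1 ∧ ⟪p.1, p.2⟫ = 0} ≃ₜ
      sphere (0 : V) 1 × sphere (0 : V) 1 :=
  ((addSubHomeomorph V).subtype (q := (· ∈ sphere (0 : V) 1 ×ˢ sphere (0 : V) 1)) fun p => by
    simp [addSubHomeomorph, norm_add_eq_one_and_norm_sub_eq_one_iff]).trans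
    (Homeomorph.Set.prod _ _)

end OrthogonalPairs

section PtolemyQuadric

def ptolemyQuadric : Set (Fin 6 → ℝ) :=
  {x | ∑ k, x k ^ 2 = 1 ∧ Pvec x = 0}

def ptolemySplit : (Fin 6 → ℝ) ≃ₜ EuclideanSpace ℝ (Fin 3) × EuclideanSpace ℝ (Fin 3) where
  toFun x := (!₂[x 0, x 2, x 1], !₂[x 5, x 3, -x 4])
  invFun p := ![p.1 0, p.1 2, p.1 1, p.2 1, -p.2 2, p.2 0]
  left_inv x := by ext i; fin_cases i <;> simp
  right_inv p := by ext i <;> fin_cases i <;> simp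
  continuous_toFun := by fun_prop
  continuous_invFun := by fun_prop

theorem norm_sq_add_norm_sq_ptolemySplit (x : Fin 6 → ℝ) :
    ‖(ptolemySplit x).1‖ ^ 2 + ‖(ptolemySplit x).2‖ ^ 2 = ∑ k, x k ^ 2 := by
  simp only [ptolemySplit, Homeomorph.homeomorph_mk_coe, Equiv.coe_fn_mk,
    EuclideanSpace.real_norm_sq_eq, Fin.sum_univ_three, Fin.sum_univ_six, Matrix.cons_val]
  ring

theorem inner_ptolemySplit (x : Fin 6 → ℝ) :
    ⟪(ptolemySplit x).1, (ptolemySplit x).2⟫ = Pvec x := by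
  simp only [ptolemySplit, Homeomorph.homeomorph_mk_coe, Equiv.coe_fn_mk, PiLp.inner_apply,
    Fin.sum_univ_three, Matrix.cons_val, RCLike.inner_apply, conj_trivial, Pvec]
  ring

noncomputable def ptolemyQuadricHomeomorph :
    ptolemyQuadric ≃ₜ
      sphere (0 : EuclideanSpace ℝ (Fin 3)) 1 × sphere (0 : EuclideanSpace ℝ (Fin 3)) 1 :=
  (ptolemySplit.subtype fun x => by
    rw [norm_sq_add_norm_sq_ptolemySplit, inner_ptolemySplit]; rfl).trans
    (orthogonalPairsHomeomorph _)

end PtolemyQuadric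

section MassScale

variable {m1 m2 m3 m4 : ℝ}

noncomputable def massScale (m1 m2 m3 m4 : ℝ) : Fin 6 → ℝ :=
  let c := 2 * (m1 + m2 + m3 + m4)
  ![√(m1 * m2 / c), √(m1 * m3 / c), √(m1 * m4 / c), √(m2 * m3 / c), √(m2 * m4 / c), √(m3 * m4 / c)]

theorem massScale_pos (hm1 : 0 < m1) (hm2 : 0 < m2) (hm3 : 0 < m3) (hm4 : 0 < m4) (k : Fin 6) :
    0 < massScale m1 m2 m3 m4 k := by
  fin_cases k <;> exact Real.sqrt_pos.2 (by positivity)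

theorem sum_sq_massScale_mul (hm1 : 0 ≤ m1) (hm2 : 0 ≤ m2) (hm3 : 0 ≤ m3) (hm4 : 0 ≤ m4)
    (r : Fin 6 → ℝ) : ∑ k, (massScale m1 m2 m3 m4 k * r k) ^ 2 = Ivec m1 m2 m3 m4 r := by
  simp only [massScale, Fin.sum_univ_six, Matrix.cons_val, mul_pow]
  simp (disch := positivity) only [Real.sq_sqrt]
  simp only [Ivec]
  ring

theorem Pvec_massScale_mul (hm1 : 0 ≤ m1) (hm2 : 0 ≤ m2) (hm3 : 0 ≤ m3) (hm4 : 0 ≤ m4)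
    (r : Fin 6 → ℝ) :
    Pvec (massScale m1 m2 m3 m4 * r) =
      massScale m1 m2 m3 m4 0 * massScale m1 m2 m3 m4 5 * Pvec r := by
  have sqrt_mul_sqrt_eq {a b a' b' : ℝ} (ha : 0 ≤ a) (ha' : 0 ≤ a') (h : a * b = a' * b') :
      √a * √b = √a' * √b' := by
    rw [← Real.sqrt_mul ha, ← Real.sqrt_mul ha', h]
  have h23 : massScale m1 m2 m3 m4 2 * massScale m1 m2 m3 m4 3 =
      massScale m1 m2 m3 m4 0 * massScale m1 m2 m3 m4 5 :=
    sqrt_mul_sqrt_eq (by positivity) (by positivity) (by ring)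
  have h14 : massScale m1 m2 m3 m4 1 * massScale m1 m2 m3 m4 4 =
      massScale m1 m2 m3 m4 0 * massScale m1 m2 m3 m4 5 :=
    sqrt_mul_sqrt_eq (by positivity) (by positivity) (by ring)
  simp only [Pvec, Pi.mul_apply]
  linear_combination (r 2 * r 3) * h23 - (r 1 * r 4) * h14

theorem mem_setM_iff (hm1 : 0 < m1) (hm2 : 0 < m2) (hm3 : 0 < m3) (hm4 : 0 < m4)
    (r : Fin 6 → ℝ) : r ∈ setM m1 m2 m3 m4 ↔ massScale m1 m2 m3 m4 * r ∈ ptolemyQuadric := by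
  have hκ : massScale m1 m2 m3 m4 0 * massScale m1 m2 m3 m4 5 ≠ 0 :=
    (mul_pos (massScale_pos hm1 hm2 hm3 hm4 0) (massScale_pos hm1 hm2 hm3 hm4 5)).ne'
  simp only [setM, ptolemyQuadric, Set.mem_ofPred_eq, Pi.mul_apply,
    sum_sq_massScale_mul hm1.le hm2.le hm3.le hm4.le,
    Pvec_massScale_mul hm1.le hm2.le hm3.le hm4.le, mul_eq_zero, hκ, false_or]

end MassScale

/-- For positive masses, `𝓜` is homeomorphic to `S² × S²`. -/
theorem setM_homeomorph_sphere_prod_sphere (m1 m2 m3 m4 : ℝ)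
    (hm1 : 0 < m1) (hm2 : 0 < m2) (hm3 : 0 < m3) (hm4 : 0 < m4) :
    Nonempty (↥(setM m1 m2 m3 m4) ≃ₜ
      (Metric.sphere (0 : EuclideanSpace ℝ (Fin 3)) 1 ×
        Metric.sphere (0 : EuclideanSpace ℝ (Fin 3)) 1)) :=
  ⟨((Homeomorph.piCongrRight fun k =>
      Homeomorph.mulLeft₀ _ (massScale_pos hm1 hm2 hm3 hm4 k).ne').subtype
      (mem_setM_iff hm1 hm2 hm3 hm4)).trans ptolemyQuadricHomeomorph⟩
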